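/- arXiv:1206.6661 — 4 statements merged into one kernel-verified Lean document; each statement's English description precedes it below -/
import Mathlib

section
/- Let K be a field, C a subfield of K, and A an n×n matrix with entries in K. Suppose A = Σ_{i=1}^r a_i M_i and A = Σ_{j=1}^r b_j N_j are two Wei–Norman decompositions of A with respect to C, i.e. (a_i) and (b_j) are both C-bases of the C-linear span of the entries of A, and M_i, N_j are n×n matrices over C. Then the C-linear span of {M₁,…,M_r} equals the C-linear span of {N₁,…,N_r} inside the space of n×n matrices over C. -/
/-!
Expanding each `b j` over the `C`-basis `a` of the span of the entries and comparing coefficients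
of `a` entry by entry writes every `M k` as a `C`-combination of the `N j`; by symmetry the two
spans coincide.
-/

theorem LinearIndependent.eq_sum_smul_of_sum_smul_eq {R V ι κ : Type*} [CommSemiring R]
    [AddCommMonoid V] [Module R V] [Fintype ι] [Fintype κ] {a : ι → V}
    (ha : LinearIndependent R a) {b : κ → V} {P : κ → ι → R}
    (hP : ∀ j, ∑ k, P j k • a k = b j) {c : ι → R} {d : κ → R}
    (h : ∑ k, c k • a k = ∑ j, d j • b j) :
    c = ∑ j, d j • P j := by
  refine linearIndependent_iff_injective_fintypeLinearCombination.mp ha ?_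
  simp only [Fintype.linearCombination_apply, h, ← hP, Finset.sum_apply, Pi.smul_apply,
    smul_eq_mul, Finset.smul_sum, smul_smul, Finset.sum_smul]
  exact Finset.sum_comm

theorem Matrix.sum_smul_map_algebraMap_apply {C K m n ι : Type*} [CommSemiring C] [CommSemiring K]
    [Algebra C K] [Fintype ι] (a : ι → K) (M : ι → Matrix m n C) (i : m) (i' : n) :
    (∑ k, a k • (M k).map (algebraMap C K)) i i' = ∑ k, M k i i' • a k := by
  simp [Matrix.sum_apply, Algebra.smul_def, mul_comm]

theorem Matrix.span_range_le_of_sum_smul_map_eq {C K ι κ m n : Type*} [CommSemiring C]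
    [CommSemiring K] [Algebra C K] [Fintype ι] [Fintype κ] {a : ι → K} {b : κ → K}
    {M : ι → Matrix m n C} {N : κ → Matrix m n C} (ha : LinearIndependent C a)
    (hba : Submodule.span C (Set.range b) ≤ Submodule.span C (Set.range a))
    (h : ∑ k, a k • (M k).map (algebraMap C K) = ∑ j, b j • (N j).map (algebraMap C K)) :
    Submodule.span C (Set.range M) ≤ Submodule.span C (Set.range N) := by
  choose P hP using fun j ↦ (Submodule.mem_span_range_iff_exists_fun C).mp
    (hba (Submodule.subset_span (Set.mem_range_self j)))
  have hM : ∀ k, M k = ∑ j, P j k • N j := by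
    intro k
    ext i i'
    have hentry : ∑ k, M k i i' • a k = ∑ j, N j i i' • b j := by
      simpa only [Matrix.sum_smul_map_algebraMap_apply] using congr($h i i')
    simpa [Matrix.sum_apply, mul_comm] using
      congrFun (ha.eq_sum_smul_of_sum_smul_eq hP hentry) k
  rw [Submodule.span_le]
  rintro _ ⟨k, rfl⟩
  rw [hM k]
  exact Submodule.sum_mem _ fun j _ ↦
    Submodule.smul_mem _ _ (Submodule.subset_span (Set.mem_range_self j))

/-- **The span of the coefficient matrices of a Wei–Norman decomposition is
independent of the choice of decomposition.**  Let `K` be a field, `C` a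
subfield of `K`, and `A` an `n × n` matrix over `K`.  If
`A = ∑ i, a i • M i` and `A = ∑ j, b j • N j` are two Wei–Norman decompositions
of `A` with respect to `C` (so `(a i)` and `(b j)` are `C`-bases of the
`C`-span of the entries of `A`, and the `M i`, `N j` are matrices over `C`),
then `span_C {M 1, …, M r} = span_C {N 1, …, N r}` inside `Mat(n, C)`. -/
theorem weiNorman_span_independent
    {K C : Type*} [Field K] [Field C] [Algebra C K]
    {n r : ℕ} (A : Matrix (Fin n) (Fin n) K)
    (a b : Fin r → K)
    (M N : Fin r → Matrix (Fin n) (Fin n) C)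
    (hlia : LinearIndependent C a)
    (hspana : Submodule.span C (Set.range a) =
      Submodule.span C {x : K | ∃ i j, A i j = x})
    (hlib : LinearIndependent C b)
    (hspanb : Submodule.span C (Set.range b) =
      Submodule.span C {x : K | ∃ i j, A i j = x})
    (hM : A = ∑ i, a i • (M i).map (algebraMap C K))
    (hN : A = ∑ j, b j • (N j).map (algebraMap C K)) :
    Submodule.span C (Set.range M) = Submodule.span C (Set.range N) :=
  le_antisymm
    (Matrix.span_range_le_of_sum_smul_map_eq hlia (by rw [hspanb, hspana]) (hM.symm.trans hN))
    (Matrix.span_range_le_of_sum_smul_map_eq hlib (by rw [hspana, hspanb]) (hN.symm.trans hM))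
end

section
/- Let K be a field and C a subfield of K. Let f₁,…,f_r ∈ K be linearly independent over C, let A₁,…,A_r be n×n matrices with entries in C, and set A := Σ_{i=1}^r f_i • A_i, an n×n matrix over K. Suppose w ∈ Cⁿ is a nonzero vector and f ∈ K satisfies A·w = f·w (viewing w as a vector in Kⁿ). Then there exist constants a₁,…,a_r ∈ C such that A_i·w = a_i·w for every i, and moreover f = Σ_{i=1}^r a_i f_i; in particular f lies in the C-span of f₁,…,f_r. -/
/-! Comparing the coordinate `j` at which `w j ≠ 0` determines the scalars `c i = (A i w)_j / w_j`
with `μ = ∑ c i • f i`; substituting this back into the other coordinates and using the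
`C`-linear independence of the `f i` forces `(A i w)_k = c i * w_k` for every `k`. -/

open Matrix

section

variable {K C : Type*} [Field K] [Field C] [Algebra C K]

theorem LinearIndependent.exists_eq_smul_of_sum_smul_eq_smul
    {ι n : Type*} [Fintype ι] {f : ι → K} (hf : LinearIndependent C f)
    {v : ι → n → C} {w : n → C} (hw : w ≠ 0) {μ : K}
    (h : ∀ k, ∑ i, v i k • f i = w k • μ) :
    ∃ c : ι → C, (∀ i, v i = c i • w) ∧ μ = ∑ i, c i • f i := by
  obtain ⟨j, hj⟩ := Function.ne_iff.mp hw
  have hμ : μ = ∑ i, ((w j)⁻¹ * v i j) • f i := by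
    simp only [mul_smul, ← Finset.smul_sum, h j, inv_smul_smul₀ hj]
  refine ⟨fun i => (w j)⁻¹ * v i j, fun i => funext fun k => ?_, hμ⟩
  have hk : ∑ i, v i k • f i = ∑ i, (w k * ((w j)⁻¹ * v i j)) • f i := by
    simp only [h k, hμ, Finset.smul_sum, mul_smul]
  simpa [mul_comm] using Fintype.linearIndependent_iffₛ.mp hf _ _ hk i

theorem sum_smul_map_mulVec_apply {ι n : Type*} [Fintype ι] [Fintype n]
    (f : ι → K) (A : ι → Matrix n n C) (w : n → C) (k : n) :
    ((∑ i, f i • (A i).map (algebraMap C K)) *ᵥ fun j => algebraMap C K (w j)) k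
      = ∑ i, (A i *ᵥ w) k • f i := by
  change ((∑ i, f i • (A i).map (algebraMap C K)) *ᵥ (algebraMap C K ∘ w)) k = _
  simp only [sum_mulVec, smul_mulVec, Finset.sum_apply, Pi.smul_apply, smul_eq_mul]
  refine Finset.sum_congr rfl fun i _ => ?_
  rw [Algebra.smul_def, RingHom.map_mulVec, mul_comm]

end

/-- **A constant eigenvector of a Wei–Norman decomposed matrix is an eigenvector
of each coefficient matrix** (Lemma `crucial_for_criterion1` of the paper).
Let `K` be a field and `C` a subfield of `K`.  Let `f 1, …, f r ∈ K` be linearly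
independent over `C`, let `A 1, …, A r` be `n × n` matrices over `C` and set
`A := ∑ i, f i • A i` (a matrix over `K`).  If `w ∈ Cⁿ` is a nonzero vector and
`fval ∈ K` satisfies `A ⬝ w = fval • w` (viewing `w` over `K`), then there are
constants `c 1, …, c r ∈ C` with `A i ⬝ w = c i • w` for every `i`, and
`fval = ∑ i, c i * f i`; in particular `fval` lies in the `C`-span of the `f i`. -/
theorem constant_eigenvector_of_weiNorman
    {K C : Type*} [Field K] [Field C] [Algebra C K]
    {n r : ℕ} (f : Fin r → K) (hf : LinearIndependent C f)
    (A : Fin r → Matrix (Fin n) (Fin n) C)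
    (w : Fin n → C) (hw : w ≠ 0) (fval : K)
    (heig : (∑ i, f i • (A i).map (algebraMap C K)).mulVec
        (fun j => algebraMap C K (w j)) = fval • fun j => algebraMap C K (w j)) :
    ∃ c : Fin r → C,
      (∀ i, (A i).mulVec w = c i • w) ∧
      fval = ∑ i, algebraMap C K (c i) * f i ∧
      fval ∈ Submodule.span C (Set.range f) := by
  have hcoord : ∀ k, ∑ i, (A i *ᵥ w) k • f i = w k • fval := fun k => by
    rw [← sum_smul_map_mulVec_apply, heig, Pi.smul_apply, smul_eq_mul, Algebra.smul_def, mul_comm]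
  obtain ⟨c, hc, hfval⟩ := hf.exists_eq_smul_of_sum_smul_eq_smul hw hcoord
  refine ⟨c, hc, by simpa only [Algebra.smul_def] using hfval, ?_⟩
  exact (Submodule.mem_span_range_iff_exists_fun C).mpr ⟨c, hfval.symm⟩
end

section
/- Let K be a differential field with derivation ∂ and field of constants C := {c ∈ K : ∂c = 0}. Extend ∂ to the polynomial ring K[X₁,…,Xₙ] coefficientwise. Let A and U be n×n matrices over K with ∂U = A·U (entrywise). Let σ_U be the K-algebra endomorphism of K[X₁,…,Xₙ] determined by σ_U(X_j) = Σ_{i=1}^n U_{ij} X_i, and let D_A be the K-linear derivation of K[X₁,…,Xₙ] determined by D_A(X_j) = Σ_{i=1}^n A_{ij} X_i. Then for every polynomial P ∈ K[X₁,…,Xₙ] all of whose coefficients lie in C, one has ∂(σ_U(P)) = D_A(σ_U(P)). -/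
/-!
Let `E` be the difference between the coefficientwise derivation `∂` of `K[X₁,…,Xₙ]` and `D_A`.
The elements killed by a derivation form a subring, and `E` kills the constants of `K` as well as
each `σ_U(X_j) = ∑ᵢ U_ij X_i`: the latter is exactly the hypothesis `∂U = A U`. Since `σ_U(P)` is a
polynomial expression in the `σ_U(X_j)` with constant coefficients, `E` kills it as well.
-/

open MvPolynomial

namespace Derivation

section Constants

variable {R S M : Type*} [CommSemiring R] [CommRing S] [Algebra R S] [AddCommGroup M]
  [Module S M] [Module R M]

def constants (D : Derivation R S M) : Subring S where
  carrier := {x | D x = 0}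
  one_mem' := D.map_one_eq_zero
  mul_mem' {a b} ha hb := by simp_all [D.leibniz]
  zero_mem' := D.map_zero
  add_mem' {a b} ha hb := by simp_all
  neg_mem' {a} ha := by simp_all

end Constants

theorem apply_eval₂_eq_of_eq {R S M B σ : Type*} [CommRing R] [CommRing S] [Algebra R S]
    [AddCommGroup M] [Module S M] [Module R M] [CommSemiring B] (D₁ D₂ : Derivation R S M)
    (φ : B →+* S) (v : σ → S) (P : MvPolynomial σ B) (hφ : ∀ m, D₁ (φ (P.coeff m)) = D₂ (φ (P.coeff m)))
    (hv : ∀ i, D₁ (v i) = D₂ (v i)) : D₁ (eval₂ φ v P) = D₂ (eval₂ φ v P) :=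
  sub_eq_zero.mp <| eval₂_mem (s := (D₁ - D₂).constants)
    (fun m _ => sub_eq_zero.mpr (hφ m)) fun i => sub_eq_zero.mpr (hv i)

section MvMapCoeffs

variable {R A σ : Type*} [CommSemiring R] [CommRing A] [Algebra R A] (d : Derivation R A A)

noncomputable def mvMapCoeffs : Derivation R (MvPolynomial σ A) (MvPolynomial σ A) where
  toFun := AddMonoidAlgebra.map (d : A →ₗ[R] A).toAddMonoidHom
  map_add' := AddMonoidAlgebra.map_add _
  map_smul' r p := by ext; simp [MvPolynomial.coeff]
  map_one_eq_zero' := by classical ext; simp [coeff_one, apply_ite d]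
  leibniz' p q := by
    classical
    ext k
    rw [coeff_add, smul_eq_mul, smul_eq_mul, coeff_mul, coeff_mul]
    show d ((p * q).coeff k) =
      ∑ x ∈ Finset.HasAntidiagonal.antidiagonal k, p.coeff x.1 * d (q.coeff x.2) +
      ∑ x ∈ Finset.HasAntidiagonal.antidiagonal k, q.coeff x.1 * d (p.coeff x.2)
    rw [Finsupp.sum_antidiagonal_swap k (fun a b => q.coeff a * d (p.coeff b))]
    simp [coeff_mul, leibniz, Finset.sum_add_distrib, map_sum]

@[simp]
theorem coeff_mvMapCoeffs (p : MvPolynomial σ A) (m : σ →₀ ℕ) :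
    (d.mvMapCoeffs p).coeff m = d (p.coeff m) := rfl

theorem mvMapCoeffs_monomial (m : σ →₀ ℕ) (a : A) :
    d.mvMapCoeffs (monomial m a) = monomial m (d a) := by
  classical
  ext k
  simp only [coeff_mvMapCoeffs, coeff_monomial, apply_ite d, map_zero]

theorem mvMapCoeffs_C_mul_X (a : A) (i : σ) : d.mvMapCoeffs (C a * X i) = C (d a) * X i := by
  simp only [C_mul_X_eq_monomial, mvMapCoeffs_monomial]

theorem mvMapCoeffs_C (a : A) : d.mvMapCoeffs (C a : MvPolynomial σ A) = C (d a) :=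
  d.mvMapCoeffs_monomial 0 a

end MvMapCoeffs

end Derivation

theorem MvPolynomial.mkDerivation_sum_C_mul_X {R ι : Type*} [CommSemiring R] [Fintype ι]
    (A U : Matrix ι ι R) (j : ι) :
    mkDerivation R (fun k => ∑ i, C (A i k) * X i) (∑ i, C (U i j) * X i : MvPolynomial ι R) =
      ∑ i, C ((A * U) i j) * X i := by
  simp only [map_sum, ← smul_eq_C_mul, Derivation.map_smul, mkDerivation_X, Finset.smul_sum,
    Matrix.mul_apply]
  rw [Finset.sum_comm]
  refine Finset.sum_congr rfl fun k _ => ?_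
  rw [Finset.sum_mul]
  refine Finset.sum_congr rfl fun i _ => ?_
  rw [smul_smul, smul_eq_C_mul, mul_comm (U i j)]

/-- **`Sym^m(U)' = sym^m(A) · Sym^m(U)` on polynomials:** if `δU = A·U` and
`P ∈ K[X₁,…,Xₙ]` has constant coefficients (each coefficient is killed by the
derivation `δ`), then the coefficientwise derivative of `σ_U(P)` equals
`D_A(σ_U(P))`, where `σ_U` is the `K`-algebra endomorphism with
`σ_U (X j) = ∑ i, U i j • X i` and `D_A` is the `K`-linear derivation with
`D_A (X j) = ∑ i, A i j • X i`. -/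
theorem deriv_sigma_eq_D_of_constant_coeffs
    {K : Type*} [Field K] (δ : Derivation ℤ K K)
    {n : ℕ} (A U : Matrix (Fin n) (Fin n) K)
    (hU : U.map δ = A * U)
    (P : MvPolynomial (Fin n) K)
    (hP : ∀ m : Fin n →₀ ℕ, δ (P.coeff m) = 0) :
    ∀ m : Fin n →₀ ℕ,
      δ (((MvPolynomial.aeval
            (fun j => ∑ i, MvPolynomial.C (U i j) * X i)) P).coeff m) =
      ((MvPolynomial.mkDerivation K
            (fun j => ∑ i, MvPolynomial.C (A i j) * X i))
          ((MvPolynomial.aeval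
            (fun j => ∑ i, MvPolynomial.C (U i j) * X i)) P)).coeff m := by
  have hδU (i j : Fin n) : δ (U i j) = (A * U) i j := congrFun (congrFun hU i) j
  have key := δ.mvMapCoeffs.apply_eval₂_eq_of_eq
    ((mkDerivation K fun j => ∑ i, C (A i j) * X i).restrictScalars ℤ) C
    (fun j => ∑ i, C (U i j) * X i) P
    (fun m => by simp [Derivation.mvMapCoeffs_C, hP])
    fun j => by
      rw [Derivation.restrictScalars_apply, mkDerivation_sum_C_mul_X, map_sum]
      simp only [Derivation.mvMapCoeffs_C_mul_X, hδU]
  exact fun m => congrArg (coeff m) key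
end

section
/- Let K be a differential field with derivation ∂, extended entrywise to matrices over K and coefficientwise to the polynomial ring K[X₁,…,Xₙ]. Let A be an n×n matrix over K, P an invertible n×n matrix over K, and B := P⁻¹·(A·P − ∂P). For an n×n matrix M over K let σ_M be the K-algebra endomorphism of K[X₁,…,Xₙ] with σ_M(X_j) = Σ_{i=1}^n M_{ij} X_i, and D_M the K-linear derivation with D_M(X_j) = Σ_{i=1}^n M_{ij} X_i. Then for every Q ∈ K[X₁,…,Xₙ]: D_B(Q) = σ_{P⁻¹}( D_A(σ_P(Q)) − ∂(σ_P(Q)) + σ_P(∂Q) ). (In matrix form on homogeneous polynomials of degree m this is the identity sym^m(P[A]) = Sym^m(P)[sym^m(A)].) -/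
open MvPolynomial

/-- The coefficientwise extension of a derivation `δ` of `K` to the polynomial
ring `K[X₁,…,Xₙ]`: the polynomial whose coefficient at each monomial `m` is
`δ` of the coefficient of `Q` at `m`. -/
noncomputable def coeffwiseDeriv {K : Type*} [Field K] (δ : Derivation ℤ K K)
    {n : ℕ} (Q : MvPolynomial (Fin n) K) : MvPolynomial (Fin n) K :=
  ∑ m ∈ Q.support, MvPolynomial.monomial m (δ (Q.coeff m))

/-- For an `n × n` matrix `M` over `K`, the `K`-algebra endomorphism `σ_M` of
`K[X₁,…,Xₙ]` determined by `σ_M (X j) = ∑ i, M i j • X i`. -/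
noncomputable def matSubst {K : Type*} [Field K] {n : ℕ}
    (M : Matrix (Fin n) (Fin n) K) :
    MvPolynomial (Fin n) K →ₐ[K] MvPolynomial (Fin n) K :=
  MvPolynomial.aeval (fun j => ∑ i, MvPolynomial.C (M i j) * X i)

/-- For an `n × n` matrix `M` over `K`, the `K`-linear derivation `D_M` of
`K[X₁,…,Xₙ]` determined by `D_M (X j) = ∑ i, M i j • X i`. -/
noncomputable def matDeriv {K : Type*} [Field K] {n : ℕ}
    (M : Matrix (Fin n) (Fin n) K) :
    Derivation K (MvPolynomial (Fin n) K) (MvPolynomial (Fin n) K) :=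
  MvPolynomial.mkDerivation K (fun j => ∑ i, MvPolynomial.C (M i j) * X i)

/-!
Both sides of the identity are additive and satisfy the Leibniz rule in `Q`: the right-hand side
is `σ_P⁻¹ ∘ (D_A - δ) ∘ σ_P + δ`, a conjugate of a derivation plus a derivation (the `σ_P(δ Q)`
term collapses to `δ Q`). A derivation of `K[X₁,…,Xₙ]` is determined by its values on constants
and variables. Both sides kill constants, and on `X j` both give the linear form whose coefficient
vector is the `j`-th column of `P⁻¹ (A P - δP)`.
-/

def Derivation.conj {R S T : Type*} [CommSemiring R] [CommRing S] [CommRing T] [Algebra R S]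
    [Algebra R T] (e : S ≃ₐ[R] T) (D : Derivation R T T) : Derivation R S S :=
  Derivation.mk' (e.symm.toLinearMap ∘ₗ D.toLinearMap ∘ₗ e.toLinearMap) fun a b => by
    change e.symm (D (e (a * b))) = a * e.symm (D (e b)) + b * e.symm (D (e a))
    rw [map_mul, D.leibniz, map_add, smul_eq_mul, smul_eq_mul, map_mul, map_mul,
      e.symm_apply_apply, e.symm_apply_apply]

theorem Derivation.conj_apply {R S T : Type*} [CommSemiring R] [CommRing S] [CommRing T]
    [Algebra R S] [Algebra R T] (e : S ≃ₐ[R] T) (D : Derivation R T T) (x : S) :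
    Derivation.conj e D x = e.symm (D (e x)) :=
  rfl

theorem MvPolynomial.derivation_ext_of_C_of_X {S R σ A : Type*} [CommSemiring S]
    [CommSemiring R] [Algebra S (MvPolynomial σ R)] [AddCommMonoid A] [Module S A]
    [Module (MvPolynomial σ R) A] {D₁ D₂ : Derivation S (MvPolynomial σ R) A}
    (hC : ∀ a, D₁ (C a) = D₂ (C a)) (hX : ∀ i, D₁ (X i) = D₂ (X i)) : D₁ = D₂ := by
  ext p
  induction p using MvPolynomial.induction_on with
  | C a => exact hC a
  | add p q hp hq => rw [map_add, map_add, hp, hq]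
  | mul_X p i hp => rw [Derivation.leibniz, Derivation.leibniz, hp, hX]

section Coeffwise

variable {K : Type*} [Field K] (δ : Derivation ℤ K K) {n : ℕ}

theorem coeff_coeffwiseDeriv (Q : MvPolynomial (Fin n) K) (m : Fin n →₀ ℕ) :
    (coeffwiseDeriv δ Q).coeff m = δ (Q.coeff m) := by
  rw [coeffwiseDeriv, coeff_sum]
  simp only [coeff_monomial]
  rw [Finset.sum_ite_eq' Q.support m fun m' => δ (Q.coeff m')]
  split_ifs with h
  · rfl
  · rw [notMem_support_iff.mp h, map_zero]

theorem coeffwiseDeriv_add (p q : MvPolynomial (Fin n) K) :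
    coeffwiseDeriv δ (p + q) = coeffwiseDeriv δ p + coeffwiseDeriv δ q := by
  ext m
  simp only [coeff_coeffwiseDeriv, coeff_add, map_add]

theorem coeffwiseDeriv_mul (p q : MvPolynomial (Fin n) K) :
    coeffwiseDeriv δ (p * q) = p * coeffwiseDeriv δ q + q * coeffwiseDeriv δ p := by
  rw [mul_comm q]
  ext m
  simp only [coeff_coeffwiseDeriv, coeff_mul, coeff_add, map_sum, ← Finset.sum_add_distrib,
    Derivation.leibniz, smul_eq_mul]
  exact Finset.sum_congr rfl fun _ _ => by ring

noncomputable def coeffwiseDerivation :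
    Derivation ℤ (MvPolynomial (Fin n) K) (MvPolynomial (Fin n) K) :=
  Derivation.mk' (AddMonoidHom.mk' (coeffwiseDeriv δ) (coeffwiseDeriv_add δ)).toIntLinearMap
    (coeffwiseDeriv_mul δ)

theorem coeffwiseDerivation_apply (Q : MvPolynomial (Fin n) K) :
    coeffwiseDerivation δ Q = coeffwiseDeriv δ Q :=
  rfl

theorem coeffwiseDeriv_C (a : K) :
    coeffwiseDeriv δ (C a : MvPolynomial (Fin n) K) = C (δ a) := by
  ext m
  simp only [coeff_coeffwiseDeriv, coeff_C, apply_ite δ, map_zero]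

theorem coeffwiseDeriv_X (j : Fin n) :
    coeffwiseDeriv δ (X j : MvPolynomial (Fin n) K) = 0 := by
  ext m
  simp only [coeff_coeffwiseDeriv, coeff_X, apply_ite δ, map_zero, coeff_zero,
    Derivation.map_one_eq_zero, ite_self]

end Coeffwise

section LinearPoly

open Matrix

variable {K : Type*} [Field K] {n : ℕ}

noncomputable def linearPoly (c : Fin n → K) : MvPolynomial (Fin n) K :=
  ∑ i, c i • X i

theorem linearPoly_sub (c d : Fin n → K) : linearPoly (c - d) = linearPoly c - linearPoly d := by
  simp only [linearPoly, Pi.sub_apply, sub_smul, Finset.sum_sub_distrib]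

theorem col_mul (M N : Matrix (Fin n) (Fin n) K) (j : Fin n) :
    (fun i => (M * N) i j) = M *ᵥ fun i => N i j :=
  rfl

theorem LinearMap.map_linearPoly (L : MvPolynomial (Fin n) K →ₗ[K] MvPolynomial (Fin n) K)
    (M : Matrix (Fin n) (Fin n) K) (hL : ∀ j, L (X j) = linearPoly fun i => M i j)
    (c : Fin n → K) : L (linearPoly c) = linearPoly (M *ᵥ c) := by
  simp only [linearPoly, map_sum, map_smul, hL, Finset.smul_sum, smul_smul, Matrix.mulVec,
    dotProduct, Finset.sum_smul]
  rw [Finset.sum_comm]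
  simp only [mul_comm]

theorem matSubst_X (M : Matrix (Fin n) (Fin n) K) (j : Fin n) :
    matSubst M (X j) = linearPoly fun i => M i j := by
  simp only [matSubst, aeval_X, linearPoly, smul_eq_C_mul]

theorem matSubst_C (M : Matrix (Fin n) (Fin n) K) (a : K) : matSubst M (C a) = C a :=
  (matSubst M).commutes a

theorem matDeriv_X (M : Matrix (Fin n) (Fin n) K) (j : Fin n) :
    matDeriv M (X j) = linearPoly fun i => M i j := by
  simp only [matDeriv, mkDerivation_X, linearPoly, smul_eq_C_mul]

theorem matSubst_linearPoly (M : Matrix (Fin n) (Fin n) K) (c : Fin n → K) :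
    matSubst M (linearPoly c) = linearPoly (M *ᵥ c) :=
  (matSubst M).toLinearMap.map_linearPoly M (matSubst_X M) c

theorem matDeriv_linearPoly (M : Matrix (Fin n) (Fin n) K) (c : Fin n → K) :
    matDeriv M (linearPoly c) = linearPoly (M *ᵥ c) :=
  (matDeriv M).toLinearMap.map_linearPoly M (matDeriv_X M) c

theorem coeffwiseDeriv_linearPoly (δ : Derivation ℤ K K) (c : Fin n → K) :
    coeffwiseDeriv δ (linearPoly c) = linearPoly fun i => δ (c i) := by
  rw [← coeffwiseDerivation_apply, linearPoly, map_sum, linearPoly]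
  refine Finset.sum_congr rfl fun i _ => ?_
  rw [smul_eq_C_mul, smul_eq_C_mul, Derivation.leibniz, coeffwiseDerivation_apply,
    coeffwiseDerivation_apply, coeffwiseDeriv_C, coeffwiseDeriv_X, smul_zero, zero_add,
    smul_eq_mul, mul_comm]

theorem matSubst_mul (M N : Matrix (Fin n) (Fin n) K) :
    matSubst (M * N) = (matSubst M).comp (matSubst N) :=
  algHom_ext fun j => by
    rw [AlgHom.comp_apply, matSubst_X, matSubst_X, matSubst_linearPoly, col_mul]

theorem matSubst_one : matSubst (1 : Matrix (Fin n) (Fin n) K) = AlgHom.id K _ :=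
  algHom_ext fun j => by
    simp [matSubst_X, linearPoly, Matrix.one_apply]

noncomputable def matSubstEquiv {P : Matrix (Fin n) (Fin n) K} (hP : IsUnit P.det) :
    MvPolynomial (Fin n) K ≃ₐ[K] MvPolynomial (Fin n) K :=
  AlgEquiv.ofAlgHom (matSubst P) (matSubst P⁻¹)
    (by rw [← matSubst_mul, mul_nonsing_inv _ hP, matSubst_one])
    (by rw [← matSubst_mul, nonsing_inv_mul _ hP, matSubst_one])

theorem conj_matSubstEquiv_apply {P : Matrix (Fin n) (Fin n) K} (hP : IsUnit P.det)
    (D : Derivation ℤ (MvPolynomial (Fin n) K) (MvPolynomial (Fin n) K))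
    (Q : MvPolynomial (Fin n) K) :
    Derivation.conj ((matSubstEquiv hP).restrictScalars ℤ) D Q = matSubst P⁻¹ (D (matSubst P Q)) :=
  Derivation.conj_apply _ _ _

end LinearPoly

theorem matDeriv_gauge_eq {K : Type*} [Field K] (δ : Derivation ℤ K K) {n : ℕ}
    (A : Matrix (Fin n) (Fin n) K) {P : Matrix (Fin n) (Fin n) K} (hP : IsUnit P.det) :
    (matDeriv (P⁻¹ * (A * P - P.map δ))).restrictScalars ℤ =
      Derivation.conj ((matSubstEquiv hP).restrictScalars ℤ)
          ((matDeriv A).restrictScalars ℤ - coeffwiseDerivation δ) +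
        coeffwiseDerivation δ := by
  refine derivation_ext_of_C_of_X (fun a => ?_) fun j => ?_
  · simp only [Derivation.restrictScalars_apply, derivation_C, Derivation.add_apply,
      conj_matSubstEquiv_apply, matSubst_C, Derivation.sub_apply, coeffwiseDerivation_apply,
      coeffwiseDeriv_C, zero_sub, map_neg, neg_add_cancel]
  · simp only [Derivation.restrictScalars_apply, matDeriv_X, Derivation.add_apply,
      conj_matSubstEquiv_apply, matSubst_X, Derivation.sub_apply, matDeriv_linearPoly,
      coeffwiseDerivation_apply, coeffwiseDeriv_linearPoly, coeffwiseDeriv_X, add_zero]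
    rw [col_mul, ← linearPoly_sub, matSubst_linearPoly]
    -- the `j`-th column of `A * P - P.map δ` is `A *ᵥ Pⱼ - δ Pⱼ` entrywise
    rfl

/-- **`sym^m(P[A]) = Sym^m(P)[sym^m(A)]` on polynomials.**  Let `K` be a
differential field with derivation `δ`, `A` an `n × n` matrix over `K`, `P`
invertible over `K`, and `B := P⁻¹ * (A * P − δP)` the gauge transform.  Then
for every `Q ∈ K[X₁,…,Xₙ]`,
`D_B(Q) = σ_{P⁻¹}( D_A(σ_P Q) − δ(σ_P Q) + σ_P(δ Q) )`,
the derivation `δ` being applied coefficientwise to polynomials. -/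
theorem matDeriv_gauge_transform
    {K : Type*} [Field K] (δ : Derivation ℤ K K)
    {n : ℕ} (A P : Matrix (Fin n) (Fin n) K) (hP : IsUnit P.det)
    (B : Matrix (Fin n) (Fin n) K)
    (hB : B = P⁻¹ * (A * P - P.map δ)) :
    ∀ Q : MvPolynomial (Fin n) K,
      matDeriv B Q =
        matSubst P⁻¹ (matDeriv A (matSubst P Q)
          - coeffwiseDeriv δ (matSubst P Q)
          + matSubst P (coeffwiseDeriv δ Q)) := by
  intro Q
  have h := DFunLike.congr_fun (matDeriv_gauge_eq δ A hP) Q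
  simp only [Derivation.restrictScalars_apply, Derivation.add_apply, conj_matSubstEquiv_apply,
    Derivation.sub_apply, coeffwiseDerivation_apply] at h
  rw [hB, h, map_add]
  congr 1
  exact ((matSubstEquiv hP).symm_apply_apply _).symm
end
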